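/- arXiv:2203.10987 — 2 statements merged into one kernel-verified Lean document; each statement's English description precedes it below -/
import Mathlib

section
/- Let E be a directed graph. The operator (H,S) ↦ (H⊥⊥, S⊥⊥) on the set of admissible pairs of E is extensive: for every admissible pair (H,S), (H,S) ≤ (H⊥⊥, S⊥⊥), i.e. H ⊆ H⊥⊥ and S ⊆ H⊥⊥ ∪ S⊥⊥. -/
namespace GraphAnn

variable {V E : Type*}

/-- `u ≥ v`: there is a (possibly trivial) path from `u` to `v`. -/
def Reach (s r : E → V) : V → V → Prop :=
  Relation.ReflTransGen (fun a b => ∃ e, s e = a ∧ r e = b)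

/-- The root `R(W)` of a set of vertices. -/
def Root (s r : E → V) (W : Set V) : Set V :=
  {u | ∃ v ∈ W, Reach s r u v}

def Hereditary (s r : E → V) (H : Set V) : Prop :=
  ∀ u v, u ∈ H → Reach s r u v → v ∈ H

def IsSink (s : E → V) (v : V) : Prop := ∀ e : E, s e ≠ v

def IsInfiniteEmitter (s : E → V) (v : V) : Prop := {e : E | s e = v}.Infinite

def IsRegular (s : E → V) (v : V) : Prop := ¬ IsSink s v ∧ ¬ IsInfiniteEmitter s v

def Saturated (s r : E → V) (H : Set V) : Prop :=
  ∀ v, IsRegular s v → (∀ e : E, s e = v → r e ∈ H) → v ∈ H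

/-- `V⊥ = E⁰ − R(V)`. -/
def perp (s r : E → V) (W : Set V) : Set V := {v | v ∉ Root s r W}

/-- Breaking vertices `B_H`. -/
def Breaking (s r : E → V) (H : Set V) : Set V :=
  {v | v ∉ H ∧ IsInfiniteEmitter s v ∧
    {e : E | s e = v ∧ r e ∉ H}.Nonempty ∧ {e : E | s e = v ∧ r e ∉ H}.Finite}

/-- `(H,S)` is an admissible pair. -/
def Admissible (s r : E → V) (H S : Set V) : Prop :=
  Hereditary s r H ∧ Saturated s r H ∧ S ⊆ Breaking s r H

/-- `S⊥ = B_{H⊥} − S`. -/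
def Sperp (s r : E → V) (H S : Set V) : Set V := Breaking s r (perp s r H) \ S

/-- A cycle: a closed path of positive length in which distinct edges have
distinct sources. -/
structure GCycle (s r : E → V) where
  edges : List E
  ne : edges ≠ []
  chain : edges.Chain' (fun e f => r e = s f)
  closed : r (edges.getLast ne) = s (edges.head ne)
  srcNodup : (edges.map s).Nodup

/-- The vertex set `c⁰` of a cycle. -/
def GCycle.verts {s r : E → V} (c : GCycle s r) : Set V :=
  {v | ∃ e ∈ c.edges, s e = v}

/-- A cycle has an exit. -/
def GCycle.HasExit {s r : E → V} (c : GCycle s r) : Prop :=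
  ∃ e, s e ∈ c.verts ∧ e ∉ c.edges

/-- An extreme cycle: it has an exit and every exit returns. -/
def GCycle.Extreme {s r : E → V} (c : GCycle s r) : Prop :=
  c.HasExit ∧ ∀ v ∈ c.verts, ∀ w, Reach s r v w → ∃ u ∈ c.verts, Reach s r w u

/-- The vertex set `α⁰` of an infinite path `α`. -/
def InfPathVerts (s : E → V) (α : ℕ → E) : Set V := {v | ∃ n, s (α n) = v}

/-- Conditions (a), (b), (c): the graph is all-reflexive. -/
def AllReflexiveGraph (s r : E → V) : Prop :=
  (∀ c : GCycle s r, ¬ c.HasExit ∨ c.Extreme) ∧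
  (∀ v, IsInfiniteEmitter s v → ∃ c : GCycle s r, v ∈ c.verts) ∧
  (∀ α : ℕ → E, (∀ n, r (α n) = s (α (n + 1))) →
    {e : E | s e ∈ InfPathVerts s α ∧ r e ∉ Root s r (InfPathVerts s α)}.Finite)

/-!
`H ⊆ H⊥⊥` because `H` is hereditary. A vertex `v ∈ S` outside `H⊥⊥` reaches `H⊥`, and since
`H⊥` is hereditary some edge of `v` already ranges in `R(H⊥)`, i.e. leaves `H⊥⊥`. The edges of `v`
leaving `H⊥⊥` leave `H`, so there are finitely many; thus `v ∈ B_{H⊥⊥}`, while `v ∉ S⊥ = B_{H⊥} − S`.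
-/

section

variable {s r : E → V}

theorem mem_root_of_mem {W : Set V} {v : V} (hv : v ∈ W) : v ∈ Root s r W :=
  ⟨v, hv, .refl⟩

theorem hereditary_perp (W : Set V) : Hereditary s r (perp s r W) :=
  fun _ _ hu huv ⟨w, hw, hvw⟩ => hu ⟨w, hw, huv.trans hvw⟩

theorem subset_perp_perp {H : Set V} (hH : Hereditary s r H) : H ⊆ perp s r (perp s r H) :=
  fun v hv ⟨w, hw, hvw⟩ => hw (mem_root_of_mem (hH v w hv hvw))

theorem exists_edge_range_mem_root {W : Set V} (hW : Hereditary s r W) {v : V}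
    (hv : v ∈ Root s r W) (hemit : ∃ e, s e = v) : ∃ e, s e = v ∧ r e ∈ Root s r W := by
  obtain ⟨w, hw, hvw⟩ := hv
  rcases hvw.cases_head with rfl | ⟨u, ⟨e, hse, hre⟩, huw⟩
  · obtain ⟨e, he⟩ := hemit
    exact ⟨e, he, mem_root_of_mem (hW _ _ hw (.single ⟨e, he, rfl⟩))⟩
  · exact ⟨e, hse, w, hw, hre ▸ huw⟩

theorem mem_breaking_of_subset {H G : Set V} (hHG : H ⊆ G) {v : V} (hv : v ∈ Breaking s r H)
    (hvG : v ∉ G) (hexit : ∃ e, s e = v ∧ r e ∉ G) : v ∈ Breaking s r G :=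
  ⟨hvG, hv.2.1, hexit, hv.2.2.2.subset fun _ ⟨hse, hre⟩ => ⟨hse, fun h => hre (hHG h)⟩⟩

end

/-- The operator `(H,S) ↦ (H⊥⊥, S⊥⊥)` on admissible pairs is extensive:
`(H,S) ≤ (H⊥⊥, S⊥⊥)`. -/
theorem perp_perp_extensive (s r : E → V) (H S : Set V)
    (h : Admissible s r H S) :
    H ⊆ perp s r (perp s r H) ∧
      S ⊆ perp s r (perp s r H) ∪ Sperp s r (perp s r H) (Sperp s r H S) := by
  obtain ⟨hH, -, hSB⟩ := h
  refine ⟨subset_perp_perp hH, fun v hvS => ?_⟩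
  by_cases hv : v ∈ perp s r (perp s r H)
  · exact .inl hv
  have hvB := hSB hvS
  obtain ⟨e, hse, hre⟩ :=
    exists_edge_range_mem_root (hereditary_perp H) (not_not.mp hv) hvB.2.1.nonempty
  refine .inr ⟨mem_breaking_of_subset (subset_perp_perp hH) hvB hv ⟨e, hse, fun h => h hre⟩, ?_⟩
  exact fun hvSperp => hvSperp.2 hvS

end GraphAnn
end

section
/- Let E be a directed graph such that each cycle of E is either without exits or extreme and such that each infinite emitter of E lies on a cycle. If H ⊆ E⁰ is hereditary and saturated, then no vertex of R(H) − H lies on a cycle, every vertex of R(H) − H is regular, and B_H = ∅. -/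
namespace GraphAnn

variable {V E : Type*}

/-!
Let `v ∈ R(H) − H` lie on a cycle `c`, and follow a path from `v` into `H`. Whether `c` has no
exits or is extreme, that path can be continued back to `c⁰`, so the hereditary set `H` meets
`c⁰`; as all vertices of a cycle reach each other, `v ∈ H`, a contradiction. Hence the infinite
emitters, which lie on cycles, avoid `R(H) − H`. A breaking vertex would be such an infinite
emitter in `R(H) − H`, since all but finitely many of its infinitely many edges end in `H`.
-/

section Cycle

variable {s r : E → V}

lemma reach_of_reflTransGen_follows {e f : E}
    (h : Relation.ReflTransGen (fun e f => r e = s f) e f) : Reach s r (s e) (s f) :=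
  Relation.ReflTransGen.lift s (fun a _ hab => ⟨a, rfl, hab⟩) _ _ h

namespace GCycle

lemma isChain_append_head (c : GCycle s r) :
    (c.edges ++ [c.edges.head c.ne]).IsChain (fun e f => r e = s f) := by
  refine c.chain.append (List.isChain_singleton _) ?_
  simpa [List.getLast?_eq_some_getLast c.ne, List.head?_eq_some_head c.ne] using c.closed

lemma reach_of_mem_verts (c : GCycle s r) {v w : V} (hv : v ∈ c.verts) (hw : w ∈ c.verts) :
    Reach s r v w := by
  obtain ⟨e, he, rfl⟩ := hv
  obtain ⟨f, hf, rfl⟩ := hw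
  have hpw : (c.edges ++ [c.edges.head c.ne]).Pairwise
      (Relation.ReflTransGen fun e f => r e = s f) :=
    (c.isChain_append_head.imp fun _ _ h => .single h).pairwise
  rw [List.pairwise_append] at hpw
  have to_head := hpw.2.2 e he _ (List.mem_singleton_self _)
  exact reach_of_reflTransGen_follows (to_head.trans (hpw.1.rel_head hf))

lemma range_mem_verts (c : GCycle s r) {e : E} (he : e ∈ c.edges) : r e ∈ c.verts := by
  obtain ⟨i, hi, rfl⟩ := List.getElem_of_mem he
  have hstep := c.isChain_append_head.getElem i (by simp; omega)
  rw [List.getElem_append_left hi] at hstep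
  refine ⟨_, ?_, hstep.symm⟩
  rcases List.mem_append.mp (List.getElem_mem (l := c.edges ++ _) _) with h | h
  · exact h
  · rw [List.mem_singleton.mp h]
    exact List.head_mem c.ne

lemma mem_verts_of_reach (c : GCycle s r) (hc : ¬ c.HasExit) {v w : V} (hv : v ∈ c.verts)
    (hvw : Reach s r v w) : w ∈ c.verts := by
  induction hvw with
  | refl => exact hv
  | tail _ hstep ih =>
    obtain ⟨e, rfl, rfl⟩ := hstep
    exact c.range_mem_verts (by_contra fun he => hc ⟨e, ih, he⟩)

lemma exists_reach_mem_verts (c : GCycle s r) (hc : ¬ c.HasExit ∨ c.Extreme) {v w : V}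
    (hv : v ∈ c.verts) (hvw : Reach s r v w) : ∃ u ∈ c.verts, Reach s r w u := by
  rcases hc with hc | hc
  · exact ⟨w, c.mem_verts_of_reach hc hv hvw, .refl⟩
  · exact hc.2 v hv w hvw

end GCycle

end Cycle

section Root

variable {s r : E → V} {H : Set V} {v : V}

lemma Hereditary.mem_of_mem_root_of_mem_verts (hH : Hereditary s r H) (c : GCycle s r)
    (hc : ¬ c.HasExit ∨ c.Extreme) (hvH : v ∈ Root s r H) (hv : v ∈ c.verts) : v ∈ H := by
  obtain ⟨h, hh, hvh⟩ := hvH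
  obtain ⟨u, hu, hhu⟩ := c.exists_reach_mem_verts hc hv hvh
  exact hH u v (hH h u hh hhu) (c.reach_of_mem_verts hu hv)

lemma not_isSink_of_mem_root_diff (hv : v ∈ Root s r H \ H) : ¬ IsSink s v := by
  obtain ⟨⟨h, hh, hvh⟩, hvH⟩ := hv
  rcases hvh.cases_head with rfl | ⟨_, ⟨e, hse, _⟩, _⟩
  · exact (hvH hh).elim
  · exact fun hs => hs e hse

lemma mem_root_diff_of_mem_breaking (hv : v ∈ Breaking s r H) : v ∈ Root s r H \ H := by
  obtain ⟨hvH, hinf, -, hfin⟩ := hv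
  obtain ⟨e, hse, hre⟩ := (hinf.sdiff hfin).nonempty
  exact ⟨⟨r e, not_not.mp fun h => hre ⟨hse, h⟩, .single ⟨e, hse, rfl⟩⟩, hvH⟩

end Root

theorem root_diff_no_cycle_regular_general (s r : E → V)
    (hcyc : ∀ c : GCycle s r, ¬ c.HasExit ∨ c.Extreme)
    (hinf : ∀ v, IsInfiniteEmitter s v → ∃ c : GCycle s r, v ∈ c.verts)
    (H : Set V) (hHer : Hereditary s r H) :
    (∀ v ∈ Root s r H \ H, ¬ ∃ c : GCycle s r, v ∈ c.verts) ∧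
      (∀ v ∈ Root s r H \ H, IsRegular s v) ∧
      Breaking s r H = ∅ := by
  have no_cycle : ∀ v ∈ Root s r H \ H, ¬ ∃ c : GCycle s r, v ∈ c.verts :=
    fun v hv ⟨c, hvc⟩ => hv.2 (hHer.mem_of_mem_root_of_mem_verts c (hcyc c) hv.1 hvc)
  have regular : ∀ v ∈ Root s r H \ H, IsRegular s v :=
    fun v hv => ⟨not_isSink_of_mem_root_diff hv, fun hv' => no_cycle v hv (hinf v hv')⟩
  exact ⟨no_cycle, regular, Set.eq_empty_of_forall_notMem fun v hv =>
    (regular v (mem_root_diff_of_mem_breaking hv)).2 hv.2.1⟩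

/-- If each cycle is either without exits or extreme and each infinite emitter
lies on a cycle, then for hereditary and saturated `H`, no vertex of
`R(H) − H` is on a cycle, each vertex of `R(H) − H` is regular, and
`B_H = ∅`. -/
theorem root_diff_no_cycle_regular (s r : E → V)
    (hcyc : ∀ c : GCycle s r, ¬ c.HasExit ∨ c.Extreme)
    (hinf : ∀ v, IsInfiniteEmitter s v → ∃ c : GCycle s r, v ∈ c.verts)
    (H : Set V) (hHer : Hereditary s r H) (hSat : Saturated s r H) :
    (∀ v ∈ Root s r H \ H, ¬ ∃ c : GCycle s r, v ∈ c.verts) ∧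
      (∀ v ∈ Root s r H \ H, IsRegular s v) ∧
      Breaking s r H = ∅ :=
  root_diff_no_cycle_regular_general s r hcyc hinf H hHer

end GraphAnn
end
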